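/- Let m ≥ 2 be an integer and p ∈ D_{2/m} a prime with p > m. If f_{2/m}(p) < (m+2)p − 2, then there exists t ∈ T(m) with p = 1 + tm; in particular p + 2 is also prime. -/

import Mathlib

/-- The set of natural numbers generated by `A` under addition (containing `0`). -/
def NSgen (A : Set ℕ) : Set ℕ := (AddSubmonoid.closure A : Set ℕ)

/-- `S` is a numerical semigroup: additively closed, contains `0`,
has finite complement in `ℕ`, and `S ≠ ℕ`. -/
def IsNumSgrp (S : Set ℕ) : Prop :=
  0 ∈ S ∧ (∀ a ∈ S, ∀ b ∈ S, a + b ∈ S) ∧ Sᶜ.Finite ∧ S ≠ Set.univ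

/-- The Frobenius number: the largest natural number not in `S`. -/
noncomputable def NSfrob (S : Set ℕ) : ℕ := sSup Sᶜ

/-- The genus: the number of gaps of `S`. -/
noncomputable def NSgenus (S : Set ℕ) : ℕ := Sᶜ.ncard

/-- The multiplicity: the least positive element of `S`. -/
noncomputable def NSmult (S : Set ℕ) : ℕ := sInf {n | n ∈ S ∧ n ≠ 0}

/-- The atoms (minimal generators) of `S`: the set `S* \ (S* + S*)` where `S* = S \ {0}`. -/
def NSatoms (S : Set ℕ) : Set ℕ :=
  {n | n ∈ S ∧ n ≠ 0 ∧ ¬ ∃ a, a ∈ S ∧ a ≠ 0 ∧ ∃ b, b ∈ S ∧ b ≠ 0 ∧ n = a + b}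

/-- The embedding dimension: the number of atoms of `S`. -/
noncomputable def NSembdim (S : Set ℕ) : ℕ := (NSatoms S).ncard

/-- The primes in the interval `I_lam(p) = [p, p + lam*p]`. -/
def primesIn (lam : ℝ) (p : ℕ) : Set ℕ :=
  {q | q.Prime ∧ p ≤ q ∧ (q : ℝ) ≤ p + lam * p}

/-- `S_lam(p)`: the numerical semigroup generated by the primes in `[p, p + lam*p]`. -/
def Slam (lam : ℝ) (p : ℕ) : Set ℕ := NSgen (primesIn lam p)

/-- `D_lam`: the primes `p` such that `[p, p + lam*p]` contains at least two primes. -/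
def Dlam (lam : ℝ) : Set ℕ :=
  {p | p.Prime ∧ ∃ q ∈ primesIn lam p, ∃ r ∈ primesIn lam p, q ≠ r}

/-- `f_lam(p)`: the Frobenius number of `S_lam(p)`. -/
noncomputable def flam (lam : ℝ) (p : ℕ) : ℕ := NSfrob (Slam lam p)

/-- `p_n`, the `n`-th prime in natural order (`nthPrime 1 = 2`). -/
noncomputable def nthPrime (n : ℕ) : ℕ := Nat.nth Nat.Prime (n - 1)

/-- `S_n`: the numerical semigroup generated by all primes `≥ p_n`. -/
noncomputable def Sn (n : ℕ) : Set ℕ := NSgen {q | q.Prime ∧ nthPrime n ≤ q}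

/-- `f_n`: the Frobenius number of `S_n`. -/
noncomputable def fn (n : ℕ) : ℕ := NSfrob (Sn n)

/-- `S(p)`: the numerical semigroup generated by the primes in `[p, 2p]`. -/
def Sp (p : ℕ) : Set ℕ := NSgen {q | q.Prime ∧ p ≤ q ∧ q ≤ 2 * p}

/-- Statement `A(m)`: large `N` of the same parity as `m` are sums of `m` almost equal primes. -/
def Astmt (m : ℕ) : Prop :=
  ∀ δ : ℝ, 0 < δ → ∃ N₀ : ℕ, 0 < N₀ ∧ ∀ N : ℕ, N₀ ≤ N → N % 2 = m % 2 →
    ∃ q : Fin m → ℕ, (∀ i, (q i).Prime) ∧ (∑ i, q i) = N ∧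
      ∀ i, |(N : ℝ) / m - q i| < δ * N

/-- `T(m)`: positive integers `t` such that `1+tm`, `3+tm` and `1+t(m+2)` are all prime. -/
def Tset (m : ℕ) : Set ℕ :=
  {t | 0 < t ∧ (1 + t * m).Prime ∧ (3 + t * m).Prime ∧ (1 + t * (m + 2)).Prime}

/-!
Both `(m + 2) p - 2` and `(m + 2) p + 2` exceed the Frobenius number, so each is a sum of primes
`q` with `p ≤ q` and `m q ≤ (m + 2) p`. Size and parity force the first sum to have exactly `m`
summands. As `p` is prime and `m q` has the parity of `(m + 2) p`, in fact `m q ≤ (m + 2) p - 2`,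
so every summand equals `((m + 2) p - 2) / m`; writing it as `p + 2t` gives `p = 1 + t m` and
`p + 2t = 1 + t (m + 2)`. The second sum has exactly `m + 2` summands, so its excess `2` over
`(m + 2) p` sits in a single summand, which is then `p + 2`.
-/

namespace Multiset

theorem sum_mod_two_of_forall_odd {l : Multiset ℕ} (h : ∀ x ∈ l, Odd x) :
    l.sum % 2 = card l % 2 := by
  induction l using Multiset.induction_on with
  | empty => simp
  | cons a s ih =>
    have ha := Nat.odd_iff.mp (h a (mem_cons_self a s))
    have hs := ih fun x hx => h x (mem_cons_of_mem hx)
    rw [sum_cons, card_cons]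
    omega

theorem mul_sum_le_card_mul {l : Multiset ℕ} {m c : ℕ} (h : ∀ x ∈ l, m * x ≤ c) :
    m * l.sum ≤ card l * c := by
  have hmap : (l.map (m * ·)).sum = m * l.sum := by rw [sum_map_mul_left, map_id']
  simpa [hmap] using sum_le_card_nsmul (l.map (m * ·)) c (by simpa using h)

theorem card_mul_eq_sum_of_forall_card_mul_le {l : Multiset ℕ}
    (h : ∀ x ∈ l, card l * x ≤ l.sum) : ∀ x ∈ l, card l * x = l.sum := by
  intro x hx
  obtain ⟨l', rfl⟩ := exists_cons_of_mem hx
  have hl' := mul_sum_le_card_mul fun y hy => h y (mem_cons_of_mem hy)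
  simp only [card_cons, sum_cons] at h hl' ⊢
  have := h x (mem_cons_self x l')
  nlinarith

end Multiset

section Representation

variable {lam : ℝ} {p N : ℕ}

theorem bddAbove_compl_Slam (hp : p ∈ Dlam lam) : BddAbove (Slam lam p)ᶜ := by
  obtain ⟨-, a, ha, b, hb, hab⟩ := hp
  have hsub : ({a, b} : Set ℕ) ⊆ primesIn lam p := Set.insert_subset ha (by simpa using hb)
  refine ⟨a * b, fun n hn => ?_⟩
  have hn' : n ∉ AddSubmonoid.closure ({a, b} : Set ℕ) := fun hc =>
    hn (AddSubmonoid.closure_mono hsub hc)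
  have := (frobeniusNumber_pair ((Nat.coprime_primes ha.1 hb.1).mpr hab) ha.1.one_lt
    hb.1.one_lt).2 hn'
  omega

theorem exists_multiset_primesIn_sum_eq_of_flam_lt (hp : p ∈ Dlam lam) (hN : flam lam p < N) :
    ∃ l : Multiset ℕ, (∀ q ∈ l, q ∈ primesIn lam p) ∧ l.sum = N := by
  have hmem : N ∈ AddSubmonoid.closure (primesIn lam p) := by
    by_contra h
    exact hN.not_ge (le_csSup (bddAbove_compl_Slam hp) h)
  exact AddSubmonoid.exists_multiset_of_mem_closure hmem

end Representation

theorem mul_le_of_mem_primesIn_two_div {m p q : ℕ} (hq : q ∈ primesIn (2 / (m : ℝ)) p) :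
    m * q ≤ (m + 2) * p := by
  rcases Nat.eq_zero_or_pos m with rfl | hm
  · simp
  have hm' : (m : ℝ) ≠ 0 := by positivity
  have : (m : ℝ) * q ≤ (m + 2) * p := calc
    (m : ℝ) * q ≤ m * (p + 2 / m * p) := by gcongr; exact hq.2.2
    _ = (m + 2) * p := by field_simp
  exact_mod_cast this

theorem mul_mod_two_of_odd (n : ℕ) {p : ℕ} (hp : Odd p) : n * p % 2 = n % 2 := by
  rw [Nat.mul_mod, Nat.odd_iff.mp hp, mul_one, Nat.mod_mod]

section Window

variable {m p : ℕ} {l : Multiset ℕ}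

theorem card_eq_of_sum_add_two_eq (hp : Odd p) (hpm : m < p)
    (hl : ∀ q ∈ l, Odd q ∧ p ≤ q ∧ m * q ≤ (m + 2) * p) (hsum : l.sum + 2 = (m + 2) * p) :
    Multiset.card l = m := by
  have hlow := Multiset.card_nsmul_le_sum fun q hq => (hl q hq).2.1
  have hupp := Multiset.mul_sum_le_card_mul fun q hq => (hl q hq).2.2
  have hpar := Multiset.sum_mod_two_of_forall_odd fun q hq => (hl q hq).1
  have hmp := mul_mod_two_of_odd (m + 2) hp
  rw [smul_eq_mul] at hlow
  have hlt : Multiset.card l < m + 2 :=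
    Nat.lt_of_mul_lt_mul_right (by omega : _ * p < (m + 2) * p)
  have hge : m ≤ Multiset.card l := by
    by_contra! h
    have h1 : (Multiset.card l + 1) * ((m + 2) * p) ≤ m * ((m + 2) * p) :=
      Nat.mul_le_mul_right _ h
    have h2 : (m + 2) * (m + 1) ≤ (m + 2) * p := Nat.mul_le_mul_left _ hpm
    have h3 : m * l.sum + 2 * m = m * ((m + 2) * p) := by rw [← hsum]; ring
    nlinarith
  omega

theorem card_eq_of_sum_eq_add_two (hp : Odd p) (hp1 : 1 < p)
    (hl : ∀ q ∈ l, Odd q ∧ p ≤ q ∧ m * q ≤ (m + 2) * p) (hsum : l.sum = (m + 2) * p + 2) :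
    Multiset.card l = m + 2 := by
  have hlow := Multiset.card_nsmul_le_sum fun q hq => (hl q hq).2.1
  have hupp := Multiset.mul_sum_le_card_mul fun q hq => (hl q hq).2.2
  have hpar := Multiset.sum_mod_two_of_forall_odd fun q hq => (hl q hq).1
  have hmp := mul_mod_two_of_odd (m + 2) hp
  rw [smul_eq_mul] at hlow
  have hp3 : 3 ≤ p := by obtain ⟨j, rfl⟩ := hp; omega
  have hlt : Multiset.card l < m + 3 :=
    Nat.lt_of_mul_lt_mul_right (by linarith : _ * p < (m + 3) * p)
  have hgt : m < Multiset.card l := by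
    by_contra! h
    have h1 : Multiset.card l * ((m + 2) * p) ≤ m * ((m + 2) * p) := Nat.mul_le_mul_right _ h
    have h2 : m * l.sum = m * ((m + 2) * p) + 2 * m := by rw [hsum]; ring
    have hm : m = 0 := by linarith
    subst hm
    have hl0 : l = 0 := Multiset.card_eq_zero.mp (by omega)
    simp [hl0] at hsum
  omega

theorem add_two_mem_of_sum_eq (hp : Odd p) (hp1 : 1 < p)
    (hl : ∀ q ∈ l, Odd q ∧ p ≤ q ∧ m * q ≤ (m + 2) * p) (hsum : l.sum = (m + 2) * p + 2) :
    p + 2 ∈ l := by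
  have hcard := card_eq_of_sum_eq_add_two hp hp1 hl hsum
  obtain ⟨q, hq, hqp⟩ : ∃ q ∈ l, q ≠ p := by
    by_contra! h
    rw [Multiset.eq_replicate_card.mpr h, Multiset.sum_replicate, hcard, smul_eq_mul] at hsum
    omega
  obtain ⟨l', rfl⟩ := Multiset.exists_cons_of_mem hq
  have hrest := Multiset.card_nsmul_le_sum fun r hr => (hl r (Multiset.mem_cons_of_mem hr)).2.1
  rw [Multiset.card_cons] at hcard
  rw [smul_eq_mul, show Multiset.card l' = m + 1 by omega] at hrest
  rw [Multiset.sum_cons] at hsum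
  have hq_le : q ≤ p + 2 := by nlinarith
  obtain ⟨⟨a, ha⟩, hpq, -⟩ := hl q hq
  obtain ⟨b, hb⟩ := hp
  rwa [show p + 2 = q by omega]

theorem mul_add_two_le_of_prime {q : ℕ} (hp : p.Prime) (hq : q.Prime) (hp_odd : Odd p)
    (hq_odd : Odd q) (hpm : m < p) (hmq : m * q ≤ (m + 2) * p) : m * q + 2 ≤ (m + 2) * p := by
  have hne : m * q ≠ (m + 2) * p := by
    intro h
    rcases hp.dvd_mul.mp ⟨m + 2, by rw [h, mul_comm]⟩ with hdvd | hdvd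
    · have := Nat.eq_zero_of_dvd_of_lt hdvd hpm
      subst this
      have := hp.pos
      omega
    · rw [(Nat.prime_dvd_prime_iff_eq hp hq).mp hdvd] at h
      have := hq.pos
      nlinarith
  have h1 := mul_mod_two_of_odd m hq_odd
  have h2 := mul_mod_two_of_odd (m + 2) hp_odd
  omega

theorem exists_eq_of_mul_add_two_eq {q : ℕ} (hp : Odd p) (hq : Odd q) (hpq : p ≤ q)
    (h : m * q + 2 = (m + 2) * p) : ∃ t, p = 1 + t * m ∧ q = 1 + t * (m + 2) := by
  obtain ⟨t, rfl⟩ : ∃ t, q = p + 2 * t := by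
    obtain ⟨a, rfl⟩ := hp
    obtain ⟨b, rfl⟩ := hq
    exact ⟨b - a, by omega⟩
  have hpt : p = 1 + t * m := by linarith
  exact ⟨t, hpt, by rw [hpt]; ring⟩

theorem exists_one_add_mul_mem_of_sum_add_two_eq (hp : p.Prime) (hp_odd : Odd p) (hpm : m < p)
    (hl : ∀ q ∈ l, q.Prime ∧ Odd q ∧ p ≤ q ∧ m * q ≤ (m + 2) * p)
    (hsum : l.sum + 2 = (m + 2) * p) : ∃ t, p = 1 + t * m ∧ 1 + t * (m + 2) ∈ l := by
  have hcard := card_eq_of_sum_add_two_eq hp_odd hpm (fun q hq => (hl q hq).2) hsum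
  have hmax : ∀ q ∈ l, m * q = l.sum := by
    have hle : ∀ q ∈ l, m * q ≤ l.sum := fun q hq => by
      obtain ⟨hq, hq_odd, -, hmq⟩ := hl q hq
      have := mul_add_two_le_of_prime hp hq hp_odd hq_odd hpm hmq
      omega
    rw [← hcard] at hle ⊢
    exact Multiset.card_mul_eq_sum_of_forall_card_mul_le hle
  obtain ⟨q, hq⟩ : ∃ q, q ∈ l := by
    rcases Multiset.empty_or_exists_mem l with rfl | h
    · have := hp.two_le
      simp only [Multiset.sum_zero, zero_add] at hsum
      nlinarith
    · exact h
  obtain ⟨-, hq_odd, hpq, -⟩ := hl q hq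
  obtain ⟨t, hpt, rfl⟩ := exists_eq_of_mul_add_two_eq hp_odd hq_odd hpq (by rw [hmax _ hq, hsum])
  exact ⟨t, hpt, hq⟩

end Window

theorem statement13 (m : ℕ) (hm : 2 ≤ m) (p : ℕ) (hp : p ∈ Dlam (2 / (m : ℝ)))
    (hpm : m < p) (hf : flam (2 / (m : ℝ)) p + 2 < (m + 2) * p) :
    (∃ t ∈ Tset m, p = 1 + t * m) ∧ (p + 2).Prime := by
  have hpp : p.Prime := hp.1
  have hp_odd : Odd p := hpp.odd_of_ne_two (by omega)
  have hwindow : ∀ q ∈ primesIn (2 / (m : ℝ)) p,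
      q.Prime ∧ Odd q ∧ p ≤ q ∧ m * q ≤ (m + 2) * p := fun q hq =>
    ⟨hq.1, hq.1.odd_of_ne_two (by have := hq.2.1; omega), hq.2.1,
      mul_le_of_mem_primesIn_two_div hq⟩
  obtain ⟨l₁, hl₁, hsum₁⟩ :=
    exists_multiset_primesIn_sum_eq_of_flam_lt hp (N := (m + 2) * p - 2) (by omega)
  obtain ⟨t, hpt, hq⟩ := exists_one_add_mul_mem_of_sum_add_two_eq hpp hp_odd hpm
    (fun q hq => hwindow q (hl₁ q hq)) (by omega)
  obtain ⟨l₂, hl₂, hsum₂⟩ :=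
    exists_multiset_primesIn_sum_eq_of_flam_lt hp (N := (m + 2) * p + 2) (by omega)
  have hp2 : (p + 2).Prime := (hl₂ _ (add_two_mem_of_sum_eq hp_odd hpp.one_lt
    (fun q hq => (hwindow q (hl₂ q hq)).2) hsum₂)).1
  have ht : 0 < t := Nat.pos_of_ne_zero fun ht => by simp [ht] at hpt; omega
  refine ⟨⟨t, ⟨ht, hpt ▸ hpp, ?_, (hl₁ _ hq).1⟩, hpt⟩, hp2⟩
  rwa [show 3 + t * m = p + 2 by omega]
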